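/- Let Γ be a finite simple graph not containing K_{2,3} or K_{2,3}⁺ as an induced subgraph, and suppose Λ ⊆ Γ is an induced subgraph containing L (three vertices, no edges) or L⁺ (three vertices, one edge) as an induced subgraph. Then Link(Λ) = ∩_{v∈Λ} Link(v) induces a complete subgraph (clique) of Γ. -/

import Mathlib

def racgRels {V : Type*} (G : SimpleGraph V) : Set (FreeGroup V) :=
  {r | (∃ v, r = FreeGroup.of v * FreeGroup.of v) ∨
    ∃ u v, G.Adj u v ∧ r = FreeGroup.of u * FreeGroup.of v * FreeGroup.of u * FreeGroup.of v}

abbrev RACG {V : Type*} (G : SimpleGraph V) : Type _ := PresentedGroup (racgRels G)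

def racgGen {V : Type*} (G : SimpleGraph V) (v : V) : RACG G := PresentedGroup.of v

def specialSubgroup {V : Type*} (G : SimpleGraph V) (S : Set V) : Subgroup (RACG G) :=
  Subgroup.closure (racgGen G '' S)

def linkSet {V : Type*} (G : SimpleGraph V) (S : Set V) : Set V :=
  {u | ∀ s ∈ S, G.Adj u s}

noncomputable def wordLength {V : Type*} (G : SimpleGraph V) (g : RACG G) : ℕ :=
  sInf {n | ∃ l : List V, l.length = n ∧ (l.map (racgGen G)).prod = g}

lemma racgGen_sq {V : Type*} (G : SimpleGraph V) (v : V) :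
    racgGen G v * racgGen G v = 1 := by
  have h : (QuotientGroup.mk (FreeGroup.of v * FreeGroup.of v) :
      PresentedGroup (racgRels G)) = 1 := by
    rw [QuotientGroup.eq_one_iff]
    exact Subgroup.subset_normalClosure (Or.inl ⟨v, rfl⟩)
  first
  | exact h
  | (simp only [racgGen, PresentedGroup.of, ← map_mul]; exact h)
  | simpa [racgGen, PresentedGroup.of, PresentedGroup.mk] using h

lemma racgGen_comm {V : Type*} (G : SimpleGraph V) {u v : V} (h : G.Adj u v) :
    racgGen G u * racgGen G v * racgGen G u * racgGen G v = 1 := by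
  have h' : (QuotientGroup.mk (FreeGroup.of u * FreeGroup.of v * FreeGroup.of u * FreeGroup.of v) :
      PresentedGroup (racgRels G)) = 1 := by
    rw [QuotientGroup.eq_one_iff]
    exact Subgroup.subset_normalClosure (Or.inr ⟨u, v, h, rfl⟩)
  first
  | exact h'
  | (simp only [racgGen, PresentedGroup.of, ← map_mul]; exact h')
  | simpa [racgGen, PresentedGroup.of, PresentedGroup.mk] using h'

/-- The complete bipartite graph `K_{2,3}` with parts `Fin 2` and `Fin 3`. -/
def K23 : SimpleGraph (Fin 2 ⊕ Fin 3) where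
  Adj x y := (x.isLeft ∧ y.isRight) ∨ (x.isRight ∧ y.isLeft)
  symm := ⟨by intro x y; revert x y; decide⟩
  loopless := ⟨by intro x; revert x; decide⟩

/-- `K_{2,3}⁺`: the graph `K_{2,3}` with one extra edge joining `b₁ = inr 0` and
`b₂ = inr 1` in the size-3 part. -/
def K23plus : SimpleGraph (Fin 2 ⊕ Fin 3) where
  Adj x y := (x.isLeft ∧ y.isRight) ∨ (x.isRight ∧ y.isLeft) ∨
    (x = Sum.inr 0 ∧ y = Sum.inr 1) ∨ (x = Sum.inr 1 ∧ y = Sum.inr 0)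
  symm := ⟨by intro x y; revert x y; decide⟩
  loopless := ⟨by intro x; revert x; decide⟩

/-- `G` contains `Hg` as an induced subgraph. -/
def ContainsInduced {α V : Type*} (Hg : SimpleGraph α) (G : SimpleGraph V) : Prop :=
  ∃ f : α → V, Function.Injective f ∧ ∀ a b, G.Adj (f a) (f b) ↔ Hg.Adj a b

/-- The group of order two, written multiplicatively. -/
abbrev Z2 : Type := Multiplicative (ZMod 2)

/-! If `x, y ∈ Link(Λ)` were distinct and non-adjacent, then `x, y` together with three vertices
of `Λ` spanning `L` (resp. `L⁺`) would span the join of the empty graph on two vertices with `L`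
(resp. `L⁺`), which is exactly `K_{2,3}` (resp. `K_{2,3}⁺`). -/

theorem injective_triple_iff_ne {α : Type*} {x y z : α} :
    Function.Injective ![x, y, z] ↔ x ≠ y ∧ x ≠ z ∧ y ≠ z := by
  simp only [Matrix.vecCons, Fin.cons_injective_iff]
  simp [Function.injective_of_subsingleton, and_comm, and_assoc]

namespace SimpleGraph

variable {α β V : Type*}

def join (H₁ : SimpleGraph α) (H₂ : SimpleGraph β) : SimpleGraph (α ⊕ β) where
  Adj
    | .inl a, .inl a' => H₁.Adj a a'
    | .inr b, .inr b' => H₂.Adj b b'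
    | .inl _, .inr _ | .inr _, .inl _ => True
  symm := ⟨by rintro (a | b) (a' | b') h <;> simp_all [adj_comm]⟩
  loopless := ⟨by rintro (a | b) h <;> simp_all⟩

theorem containsInduced_join_comap {G : SimpleGraph V} {f : α → V} {g : β → V}
    (hf : f.Injective) (hg : g.Injective) (hfg : ∀ a b, G.Adj (f a) (g b)) :
    ContainsInduced ((G.comap f).join (G.comap g)) G := by
  refine ⟨Sum.elim f g, Sum.elim_injective.mpr ⟨hf, hg, fun a b ↦ (hfg a b).ne⟩, ?_⟩
  rintro (a | b) (a' | b')
  · simp [join]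
  · simp [join, hfg]
  · simp [join, G.adj_comm (g b), hfg]
  · simp [join]

variable {G : SimpleGraph V} {x y z : V}

theorem comap_pair_eq_bot (hxy : ¬G.Adj x y) : G.comap ![x, y] = ⊥ := by
  ext i j
  fin_cases i <;> fin_cases j <;> simp [hxy, G.adj_comm y x]

theorem comap_triple_eq_bot (hxy : ¬G.Adj x y) (hxz : ¬G.Adj x z) (hyz : ¬G.Adj y z) :
    G.comap ![x, y, z] = ⊥ := by
  ext i j
  fin_cases i <;> fin_cases j <;>
    simp [hxy, hxz, hyz, G.adj_comm y x, G.adj_comm z x, G.adj_comm z y]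

theorem comap_triple_eq_edge (hxy : G.Adj x y) (hxz : ¬G.Adj x z) (hyz : ¬G.Adj y z) :
    G.comap ![x, y, z] = edge 0 1 := by
  ext i j
  fin_cases i <;> fin_cases j <;>
    simp [edge_adj, hxy, hxz, hyz, G.adj_comm y x, G.adj_comm z x, G.adj_comm z y]

end SimpleGraph

open SimpleGraph

theorem K23_eq_join : K23 = (⊥ : SimpleGraph (Fin 2)).join ⊥ := by
  ext x y
  rcases x with a | b <;> rcases y with a' | b' <;> simp [K23, join]

theorem K23plus_eq_join : K23plus = (⊥ : SimpleGraph (Fin 2)).join (edge 0 1) := by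
  ext x y
  fin_cases x <;> fin_cases y <;> simp [K23plus, join, edge_adj]

theorem link_is_clique_of_no_K23_general
    {V : Type*} (G : SimpleGraph V)
    (hK : ¬ ContainsInduced K23 G) (hKplus : ¬ ContainsInduced K23plus G)
    (Λ : Set V)
    (hL : ∃ u ∈ Λ, ∃ v ∈ Λ, ∃ w ∈ Λ, u ≠ v ∧ u ≠ w ∧ v ≠ w ∧
      ((¬G.Adj u v ∧ ¬G.Adj u w ∧ ¬G.Adj v w) ∨
       (G.Adj u v ∧ ¬G.Adj u w ∧ ¬G.Adj v w))) :
    ∀ x ∈ linkSet G Λ, ∀ y ∈ linkSet G Λ, x ≠ y → G.Adj x y := by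
  intro x hx y hy hxy
  by_contra hxy'
  obtain ⟨u, hu, v, hv, w, hw, huv, huw, hvw, hcase⟩ := hL
  have hjoin := containsInduced_join_comap (G := G) (injective_pair_iff_ne.mpr hxy)
    (injective_triple_iff_ne.mpr ⟨huv, huw, hvw⟩)
    (by simp [Fin.forall_fin_succ, hx u hu, hx v hv, hx w hw, hy u hu, hy v hv, hy w hw])
  rw [comap_pair_eq_bot hxy'] at hjoin
  rcases hcase with ⟨h₁, h₂, h₃⟩ | ⟨h₁, h₂, h₃⟩
  · rw [comap_triple_eq_bot h₁ h₂ h₃, ← K23_eq_join] at hjoin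
    exact hK hjoin
  · rw [comap_triple_eq_edge h₁ h₂ h₃, ← K23plus_eq_join] at hjoin
    exact hKplus hjoin

/-- If `Γ` contains neither `K_{2,3}` nor `K_{2,3}⁺` as an induced subgraph and
`Λ ⊆ Γ` contains `L` or `L⁺` as an induced subgraph, then `Link(Λ)` is a clique. -/
theorem link_is_clique_of_no_K23
    {V : Type*} [Fintype V] (G : SimpleGraph V)
    (hK : ¬ ContainsInduced K23 G) (hKplus : ¬ ContainsInduced K23plus G)
    (Λ : Set V)
    (hL : ∃ u ∈ Λ, ∃ v ∈ Λ, ∃ w ∈ Λ, u ≠ v ∧ u ≠ w ∧ v ≠ w ∧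
      ((¬G.Adj u v ∧ ¬G.Adj u w ∧ ¬G.Adj v w) ∨
       (G.Adj u v ∧ ¬G.Adj u w ∧ ¬G.Adj v w))) :
    ∀ x ∈ linkSet G Λ, ∀ y ∈ linkSet G Λ, x ≠ y → G.Adj x y :=
  link_is_clique_of_no_K23_general G hK hKplus Λ hL
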